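/- arXiv:2504.13316 — 5 statements merged into one kernel-verified Lean document; each statement's English description precedes it below -/
import Mathlib

section
/- If h/k and h'/k' are successive terms of the Farey sequence of order m (all reduced fractions in [0,1] with denominator at most m, listed in increasing order), then h'k − hk' = 1. -/
/-!
Since `gcd h k = 1`, the equation `k x - h y = 1` has a solution with `m - k < y ≤ m`; then `x/y`
is a reduced fraction of `F_m` just to the right of `h/k`. It cannot lie strictly before `h'/k'`
by adjacency, nor strictly after it, since any fraction strictly between `h/k` and `x/y` has
denominator at least `k + y > m`. Hence `x/y = h'/k'`, and `h' k - h k' = k x - h y = 1`.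
-/

theorem Int.exists_sub_mul_eq_one_of_mem_Ioc {h k : ℤ} (hcop : IsCoprime h k) (hk : 0 < k)
    (m : ℤ) : ∃ x y : ℤ, k * x - h * y = 1 ∧ m - k < y ∧ y ≤ m := by
  obtain ⟨u, v, huv⟩ := hcop
  have hdiv := Int.emod_add_mul_ediv (m + u) k
  have := Int.emod_nonneg (m + u) hk.ne'
  have := Int.emod_lt_of_pos (m + u) hk
  refine ⟨v + h * ((m + u) / k), m - (m + u) % k, ?_, by omega, by omega⟩
  linear_combination huv + h * hdiv

theorem Nat.exists_mul_eq_mul_add_one_of_mem_Ioc {h k : ℕ} (hcop : h.Coprime k) (hk : 0 < k)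
    {m : ℕ} (hkm : k ≤ m) : ∃ x y : ℕ, k * x = h * y + 1 ∧ y ≤ m ∧ m < k + y := by
  obtain ⟨x, y, hdet, hmy, hym⟩ := Int.exists_sub_mul_eq_one_of_mem_Ioc
    (Nat.isCoprime_iff_coprime.mpr hcop) (by exact_mod_cast hk) m
  have hy : 0 ≤ y := by omega
  have hx : 0 ≤ x := by nlinarith
  lift x to ℕ using hx
  lift y to ℕ using hy
  exact ⟨x, y, by zify; linarith, by omega, by omega⟩

theorem Int.add_le_of_lt_of_lt_of_det_eq_one {a b c d p q : ℤ} (hdet : b * c - a * d = 1)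
    (hb : 0 < b) (hd : 0 < d) (hl : a * q < p * b) (hr : p * d < c * q) : b + d ≤ q := by
  have hq : q = b * (c * q - p * d) + d * (p * b - a * q) := by linear_combination -q * hdet
  nlinarith

theorem Rat.natCast_div_lt_natCast_div_iff {a b c d : ℕ} (hb : 0 < b) (hd : 0 < d) :
    (a : ℚ) / b < c / d ↔ (a : ℤ) * d < c * b := by
  rw [div_lt_div_iff₀ (by exact_mod_cast hb) (by exact_mod_cast hd)]
  norm_cast

theorem stmt_6_general (m h k h' k' : ℕ)
    (hk : 0 < k) (hk' : 0 < k') (hkm : k ≤ m) (hk'm : k' ≤ m)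
    (hh' : h' ≤ k')
    (hcop : Nat.gcd h k = 1) (hcop' : Nat.gcd h' k' = 1)
    (hlt : (h : ℚ) / k < (h' : ℚ) / k')
    (hadj : ¬ ∃ a b : ℕ, 0 < b ∧ b ≤ m ∧ a ≤ b ∧ Nat.gcd a b = 1 ∧
      (h : ℚ) / k < (a : ℚ) / b ∧ (a : ℚ) / b < (h' : ℚ) / k') :
    (h' : ℤ) * k - h * k' = 1 := by
  obtain ⟨x, y, hdet, hym, hmy⟩ := Nat.exists_mul_eq_mul_add_one_of_mem_Ioc hcop hk hkm
  have hy : 0 < y := by omega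
  have hdetZ : (k : ℤ) * x - h * y = 1 := by zify at hdet; linarith
  have hxy : Nat.Coprime x y :=
    Nat.isCoprime_iff_coprime.mp ⟨k, -h, by linear_combination hdetZ⟩
  have hleft : (h : ℚ) / k < x / y := by
    rw [Rat.natCast_div_lt_natCast_div_iff hk hy]; linarith
  have heq : (x : ℚ) / y = h' / k' := by
    rcases lt_trichotomy ((x : ℚ) / y) (h' / k') with hbefore | heq | hafter
    · have hx_lt : (x : ℚ) < y := (div_lt_one (by positivity)).mp <|
        hbefore.trans_le <| div_le_one_of_le₀ (by exact_mod_cast hh') (by positivity)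
      exact (hadj ⟨x, y, hy, hym, by exact_mod_cast hx_lt.le, hxy, hleft, hbefore⟩).elim
    · exact heq
    · rw [Rat.natCast_div_lt_natCast_div_iff hk hk'] at hlt
      rw [Rat.natCast_div_lt_natCast_div_iff hk' hy] at hafter
      have := Int.add_le_of_lt_of_lt_of_det_eq_one hdetZ (by exact_mod_cast hk)
        (by exact_mod_cast hy) hlt hafter
      omega
  obtain ⟨hxh, hyk⟩ : (x : ℤ) = h' ∧ (y : ℤ) = k' :=
    Rat.div_int_inj (by exact_mod_cast hy) (by exact_mod_cast hk') (by simpa using hxy)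
      (by simpa using hcop') (by push_cast; exact heq)
  linear_combination hdetZ - k * hxh + h * hyk

theorem stmt_6 (m h k h' k' : ℕ) (hm : 0 < m)
    (hk : 0 < k) (hk' : 0 < k') (hkm : k ≤ m) (hk'm : k' ≤ m)
    (hh : h ≤ k) (hh' : h' ≤ k')
    (hcop : Nat.gcd h k = 1) (hcop' : Nat.gcd h' k' = 1)
    (hlt : (h : ℚ) / k < (h' : ℚ) / k')
    (hadj : ¬ ∃ a b : ℕ, 0 < b ∧ b ≤ m ∧ a ≤ b ∧ Nat.gcd a b = 1 ∧
      (h : ℚ) / k < (a : ℚ) / b ∧ (a : ℚ) / b < (h' : ℚ) / k') :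
    (h' : ℤ) * k - h * k' = 1 :=
  stmt_6_general m h k h' k' hk hk' hkm hk'm hh' hcop hcop' hlt hadj
end

section
/- Let 0 < s/m < 1 be a fraction with d = gcd(s, m), and let F(j), for 1 ≤ j ≤ m/d, be the (s/m)-billiard sequence, defined by F(1) = 0 and: F(j) + F(j+1) ∈ {s/m, 1 + s/m} for j odd, and F(j) + F(j+1) ∈ {0, 1} for j even, with all F(j) ∈ [0,1). Then {2m·F(1), 2m·F(2), …, 2m·F(m/d)} = {0, 2d, 4d, …, 2m − 2d}. -/
private def gaux (s m j : ℕ) : ℤ :=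
  ((-1 : ℤ) ^ j * ((j / 2 : ℕ) : ℤ) * (s : ℤ)) % (m : ℤ)

private lemma gaux_nonneg (s m j : ℕ) (hm : 0 < m) : 0 ≤ gaux s m j :=
  Int.emod_nonneg _ (by exact_mod_cast hm.ne')

private lemma gaux_lt (s m j : ℕ) (hm : 0 < m) : gaux s m j < m :=
  Int.emod_lt_of_pos _ (by exact_mod_cast hm)

private lemma sub_emod_emod (a b c : ℤ) : (a - b % c) % c = (a - b) % c := by
  rw [Int.sub_emod, Int.emod_emod_of_dvd _ dvd_rfl, ← Int.sub_emod]

private lemma gaux_succ_odd (s m k : ℕ) (hk : Odd k) :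
    gaux s m (k + 1) = ((s : ℤ) - gaux s m k) % m := by
  obtain ⟨t, rfl⟩ := hk
  unfold gaux
  rw [sub_emod_emod]
  congr 1
  rw [show (2 * t + 1 + 1) / 2 = t + 1 by omega, show (2 * t + 1) / 2 = t by omega,
    show (-1 : ℤ) ^ (2 * t + 1 + 1) = 1 by
      rw [show 2 * t + 1 + 1 = 2 * (t + 1) by ring]; simp [pow_mul],
    show (-1 : ℤ) ^ (2 * t + 1) = -1 by simp [pow_succ, pow_mul]]
  push_cast
  ring

private lemma gaux_succ_even (s m k : ℕ) (hk : Even k) :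
    gaux s m (k + 1) = (0 - gaux s m k) % m := by
  obtain ⟨t, rfl⟩ := hk
  unfold gaux
  rw [sub_emod_emod]
  congr 1
  rw [show (t + t + 1) / 2 = t by omega, show (t + t) / 2 = t by omega,
    show (-1 : ℤ) ^ (t + t + 1) = -1 by
      rw [show t + t + 1 = 2 * t + 1 by ring]; simp [pow_succ, pow_mul],
    show (-1 : ℤ) ^ (t + t) = 1 by rw [show t + t = 2 * t by ring]; simp [pow_mul]]
  ring

private lemma small_dvd (n x : ℤ) (hn : 0 < n) (h : n ∣ x) (h1 : -n < x) (h2 : x < n) :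
    x = 0 := by
  obtain ⟨c, rfl⟩ := h
  rcases lt_trichotomy c 0 with hc | hc | hc
  · have : n * c ≤ n * (-1) := mul_le_mul_of_nonneg_left (by omega) hn.le
    linarith
  · simp [hc]
  · have : n * 1 ≤ n * c := mul_le_mul_of_nonneg_left (by omega) hn.le
    linarith

private lemma inj_core (n j1 j2 : ℕ) (hn : 0 < n) (ha : 1 ≤ j1) (hb : j1 ≤ n)
    (hc : 1 ≤ j2) (he : j2 ≤ n)
    (hdvd : (n : ℤ) ∣ ((-1) ^ j2 * ((j2 / 2 : ℕ) : ℤ) - (-1) ^ j1 * ((j1 / 2 : ℕ) : ℤ))) :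
    j1 = j2 := by
  have hn' : (0 : ℤ) < n := by exact_mod_cast hn
  rcases Nat.even_or_odd j1 with h1 | h1 <;> rcases Nat.even_or_odd j2 with h2 | h2
  · have h1' := Nat.even_iff.mp h1
    have h2' := Nat.even_iff.mp h2
    rw [h2.neg_one_pow, h1.neg_one_pow, one_mul, one_mul] at hdvd
    have h0 := small_dvd _ _ hn' hdvd (by omega) (by omega)
    omega
  · have h1' := Nat.even_iff.mp h1
    have h2' := Nat.odd_iff.mp h2
    rw [h2.neg_one_pow, h1.neg_one_pow] at hdvd
    simp only [neg_one_mul, one_mul] at hdvd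
    have h0 := small_dvd _ _ hn' hdvd (by omega) (by omega)
    omega
  · have h1' := Nat.odd_iff.mp h1
    have h2' := Nat.even_iff.mp h2
    rw [h2.neg_one_pow, h1.neg_one_pow] at hdvd
    simp only [neg_one_mul, one_mul] at hdvd
    have h0 := small_dvd _ _ hn' hdvd (by omega) (by omega)
    omega
  · have h1' := Nat.odd_iff.mp h1
    have h2' := Nat.odd_iff.mp h2
    rw [h2.neg_one_pow, h1.neg_one_pow] at hdvd
    simp only [neg_one_mul] at hdvd
    have h0 := small_dvd _ _ hn' hdvd (by omega) (by omega)
    omega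

private lemma eq_emod_of (m : ℕ) (q : ℚ) (a b : ℤ) (hm : 0 < m)
    (ha : (m : ℚ) * q = (a : ℚ)) (hq0 : 0 ≤ q) (hq1 : q < 1)
    (hab : a % m = b) : (m : ℚ) * q = (b : ℚ) := by
  have hmq : (0 : ℚ) < m := by exact_mod_cast hm
  have h0 : (0 : ℤ) ≤ a := by
    have : (0 : ℚ) ≤ (a : ℚ) := by rw [← ha]; exact mul_nonneg hmq.le hq0
    exact_mod_cast this
  have h1 : a < m := by
    have : (a : ℚ) < m := by rw [← ha]; nlinarith
    exact_mod_cast this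
  rw [ha, ← hab, Int.emod_eq_of_lt h0 h1]

theorem stmt_7 (s m : ℕ) (hs : 0 < s) (hsm : s < m)
    (d : ℕ) (hd : d = Nat.gcd s m)
    (F : ℕ → ℚ)
    (hF1 : F 1 = 0)
    (hrange : ∀ j, 1 ≤ j → j ≤ m / d → 0 ≤ F j ∧ F j < 1)
    (hodd : ∀ j, 1 ≤ j → j < m / d → Odd j →
      F j + F (j + 1) = (s : ℚ) / m ∨ F j + F (j + 1) = 1 + (s : ℚ) / m)
    (heven : ∀ j, 1 ≤ j → j < m / d → Even j →
      F j + F (j + 1) = 0 ∨ F j + F (j + 1) = 1) :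
    (Finset.Icc 1 (m / d)).image (fun j => 2 * (m : ℚ) * F j) =
      (Finset.range (m / d)).image (fun i : ℕ => (2 * d * i : ℚ)) := by
  have hm0 : 0 < m := hs.trans hsm
  have hd0 : 0 < d := hd ▸ Nat.gcd_pos_of_pos_left m hs
  have hds : d ∣ s := hd ▸ Nat.gcd_dvd_left s m
  have hdm : d ∣ m := hd ▸ Nat.gcd_dvd_right s m
  set n := m / d with hn
  have hmdn : m = d * n := (Nat.mul_div_cancel' hdm).symm
  have hn0 : 0 < n := Nat.div_pos (Nat.le_of_dvd hm0 hdm) hd0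
  have hmQ : ((m : ℚ)) ≠ 0 := by positivity
  -- key formula
  have key : ∀ j, 1 ≤ j → j ≤ n → (m : ℚ) * F j = ((gaux s m j : ℤ) : ℚ) := by
    intro j
    induction j with
    | zero => intro h _; exact absurd h (by omega)
    | succ k ih =>
      intro _ hk1n
      rcases Nat.eq_zero_or_pos k with rfl | hk
      · norm_num [hF1, gaux]
      · have hkn : k < n := by omega
        have hFk := ih hk (by omega)
        have hr := hrange (k + 1) (by omega) hk1n
        rcases Nat.even_or_odd k with hke | hko
        · rcases heven k hk hkn hke with h | h
          · refine eq_emod_of m (F (k + 1)) (0 - gaux s m k) _ hm0 ?_ hr.1 hr.2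
              (gaux_succ_even s m k hke).symm
            push_cast
            rw [← hFk]
            linear_combination (m : ℚ) * h
          · refine eq_emod_of m (F (k + 1)) (0 - gaux s m k + m) _ hm0 ?_ hr.1 hr.2 ?_
            · push_cast
              rw [← hFk]
              linear_combination (m : ℚ) * h
            · rw [Int.add_emod_right, ← gaux_succ_even s m k hke]
        · rcases hodd k hk hkn hko with h | h
          · have h' : (F k + F (k + 1)) * m = s := ((div_eq_iff hmQ).mp h.symm).symm
            refine eq_emod_of m (F (k + 1)) ((s : ℤ) - gaux s m k) _ hm0 ?_ hr.1 hr.2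
              (gaux_succ_odd s m k hko).symm
            push_cast
            rw [← hFk]
            linear_combination h'
          · have h'' : (s : ℚ) / m = F k + F (k + 1) - 1 := by linear_combination -h
            have h' : (F k + F (k + 1) - 1) * m = s := ((div_eq_iff hmQ).mp h'').symm
            refine eq_emod_of m (F (k + 1)) ((s : ℤ) - gaux s m k + m) _ hm0 ?_ hr.1 hr.2 ?_
            · push_cast
              rw [← hFk]
              linear_combination h'
            · rw [Int.add_emod_right, ← gaux_succ_odd s m k hko]
  -- injectivity
  have hinj : Set.InjOn (fun j => 2 * (m : ℚ) * F j) (Finset.Icc 1 n) := by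
    intro j1 hj1 j2 hj2 heq
    simp only [Finset.coe_Icc, Set.mem_Icc] at hj1 hj2
    have e1 := key j1 hj1.1 hj1.2
    have e2 := key j2 hj2.1 hj2.2
    have heq' : 2 * (m : ℚ) * F j1 = 2 * (m : ℚ) * F j2 := heq
    have hg : gaux s m j1 = gaux s m j2 := by
      have : ((gaux s m j1 : ℤ) : ℚ) = ((gaux s m j2 : ℤ) : ℚ) := by
        rw [← e1, ← e2]; linear_combination heq' / 2
      exact_mod_cast this
    unfold gaux at hg
    have hdvd : (m : ℤ) ∣ ((-1) ^ j2 * ((j2 / 2 : ℕ) : ℤ) * s -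
        (-1) ^ j1 * ((j1 / 2 : ℕ) : ℤ) * s) := Int.ModEq.dvd hg
    have hd' : ((d : ℤ)) ≠ 0 := by exact_mod_cast hd0.ne'
    have hs2 : (s : ℤ) = (d : ℤ) * ((s / d : ℕ) : ℤ) := by
      exact_mod_cast (Nat.mul_div_cancel' hds).symm
    have hdvd2 : (n : ℤ) ∣ ((-1) ^ j2 * ((j2 / 2 : ℕ) : ℤ) -
        (-1) ^ j1 * ((j1 / 2 : ℕ) : ℤ)) * ((s / d : ℕ) : ℤ) := by
      have hstep : (d : ℤ) * (n : ℤ) ∣ (d : ℤ) * (((-1) ^ j2 * ((j2 / 2 : ℕ) : ℤ) -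
          (-1) ^ j1 * ((j1 / 2 : ℕ) : ℤ)) * ((s / d : ℕ) : ℤ)) := by
        have hmd : ((m : ℤ)) = (d : ℤ) * (n : ℤ) := by exact_mod_cast hmdn
        rw [← hmd]
        convert hdvd using 1
        rw [hs2]; ring
      exact (mul_dvd_mul_iff_left hd').mp hstep
    have hcop : IsCoprime ((n : ℤ)) (((s / d : ℕ)) : ℤ) := by
      rw [Nat.isCoprime_iff_coprime]
      have : Nat.Coprime (s / d) n := by
        rw [hn, hd]
        exact Nat.coprime_div_gcd_div_gcd (hd ▸ hd0)
      exact this.symm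
    exact inj_core n j1 j2 hn0 hj1.1 hj1.2 hj2.1 hj2.2
      (hcop.dvd_of_dvd_mul_right hdvd2)
  -- subset
  have hsub : (Finset.Icc 1 n).image (fun j => 2 * (m : ℚ) * F j) ⊆
      (Finset.range n).image (fun i : ℕ => (2 * d * i : ℚ)) := by
    intro x hx
    simp only [Finset.mem_image, Finset.mem_Icc] at hx
    obtain ⟨j, ⟨hj1, hj2⟩, rfl⟩ := hx
    have hk := key j hj1 hj2
    have hgd : (d : ℤ) ∣ gaux s m j := by
      unfold gaux
      rw [Int.emod_def]
      refine dvd_sub (Dvd.dvd.mul_left (Int.natCast_dvd_natCast.mpr hds) _) ?_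
      exact (Int.natCast_dvd_natCast.mpr hdm).mul_right _
    obtain ⟨c, hc⟩ := hgd
    have hd' : (0 : ℤ) < d := by exact_mod_cast hd0
    have hc0 : 0 ≤ c := by nlinarith [gaux_nonneg s m j hm0, hc]
    have hcn : c < n := by
      have h1 := gaux_lt s m j hm0
      rw [hc] at h1
      have hmd : ((m : ℤ)) = (d : ℤ) * (n : ℤ) := by exact_mod_cast hmdn
      rw [hmd] at h1
      exact lt_of_mul_lt_mul_left h1 hd'.le
    simp only [Finset.mem_image, Finset.mem_range]
    refine ⟨c.toNat, by omega, ?_⟩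
    have h2 : 2 * (m : ℚ) * F j = 2 * ((gaux s m j : ℤ) : ℚ) := by linear_combination 2 * hk
    rw [h2, hc]
    have hcast : ((c.toNat : ℕ) : ℚ) = ((c : ℤ) : ℚ) := by
      rw [← Int.cast_natCast, Int.toNat_of_nonneg hc0]
    push_cast
    rw [hcast]
    ring
  refine Finset.eq_of_subset_of_card_le hsub ?_
  have hc1 : ((Finset.Icc 1 n).image (fun j => 2 * (m : ℚ) * F j)).card = n := by
    rw [Finset.card_image_of_injOn hinj, Nat.card_Icc]
    omega
  rw [hc1]
  exact le_trans Finset.card_image_le (by simp)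
end

section
/- Let 0 < s/m < 1 be a fraction with d = gcd(s, m), and let F(j), 1 ≤ j ≤ m/d, be the (s/m)-billiard sequence. Then 2m·F(m/d) equals s if s/d is even, equals m if m/d is even, and equals s + m if both s/d and m/d are odd. -/
private lemma eq_of_int_diff (a b : ℚ) (k : ℤ) (h : a - b = k)
    (ha : 0 ≤ a) (ha' : a < 1) (hb : 0 ≤ b) (hb' : b < 1) : a = b := by
  have h1 : (-1 : ℚ) < (k : ℚ) := by rw [← h]; linarith
  have h2 : (k : ℚ) < 1 := by rw [← h]; linarith
  have h1' : (-1 : ℤ) < k := by exact_mod_cast h1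
  have h2' : k < 1 := by exact_mod_cast h2
  have : k = 0 := by omega
  rw [this] at h
  push_cast at h
  linarith

theorem stmt_8 (s m : ℕ) (hs : 0 < s) (hsm : s < m)
    (d : ℕ) (hd : d = Nat.gcd s m)
    (F : ℕ → ℚ)
    (hF1 : F 1 = 0)
    (hrange : ∀ j, 1 ≤ j → j ≤ m / d → 0 ≤ F j ∧ F j < 1)
    (hodd : ∀ j, 1 ≤ j → j < m / d → Odd j →
      F j + F (j + 1) = (s : ℚ) / m ∨ F j + F (j + 1) = 1 + (s : ℚ) / m)
    (heven : ∀ j, 1 ≤ j → j < m / d → Even j →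
      F j + F (j + 1) = 0 ∨ F j + F (j + 1) = 1) :
    (Even (s / d) → 2 * (m : ℚ) * F (m / d) = s) ∧
    (Even (m / d) → 2 * (m : ℚ) * F (m / d) = m) ∧
    (Odd (s / d) → Odd (m / d) → 2 * (m : ℚ) * F (m / d) = s + m) := by
  have hm : 0 < m := lt_trans hs hsm
  have hd0 : 0 < d := by rw [hd]; exact Nat.gcd_pos_of_pos_left m hs
  have hsd : d ∣ s := hd ▸ Nat.gcd_dvd_left s m
  have hmd : d ∣ m := hd ▸ Nat.gcd_dvd_right s m
  set n := m / d with hn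
  set σ := s / d with hσ
  have hs' : d * σ = s := Nat.mul_div_cancel' hsd
  have hm' : d * n = m := Nat.mul_div_cancel' hmd
  have hn1 : 1 ≤ n := Nat.one_le_div_iff hd0 |>.mpr (Nat.le_of_dvd hm hmd)
  have hcop : Nat.gcd σ n = 1 := by
    rw [hσ, hn, hd]
    exact Nat.coprime_div_gcd_div_gcd (by rw [← hd]; exact hd0)
  have hmQ : (m : ℚ) ≠ 0 := by positivity
  -- key induction
  have key : ∀ j, 1 ≤ j → j ≤ n → ∃ k : ℤ,
      F j = (-1 : ℚ) ^ j * ((j / 2 : ℕ) : ℚ) * s / m + k := by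
    intro j
    induction j with
    | zero => omega
    | succ i ih =>
      intro _ h2
      by_cases hi : i = 0
      · subst hi
        exact ⟨0, by simp [hF1]⟩
      · have hi1 : 1 ≤ i := by omega
        have hin : i < n := by omega
        obtain ⟨k, hk⟩ := ih hi1 (by omega)
        rcases Nat.even_or_odd i with he | ho
        · have hdiv : (i + 1) / 2 = i / 2 := by
            obtain ⟨a, ha⟩ := he; omega
          have hpow : (-1 : ℚ) ^ i = 1 := he.neg_one_pow
          have hpow' : (-1 : ℚ) ^ (i + 1) = -1 := by
            rw [pow_succ, hpow]; ring
          rcases heven i hi1 hin he with hc | hc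
          · refine ⟨-k, ?_⟩
            have hF : F (i + 1) = 0 - F i := by linarith
            rw [hF, hk, hdiv, hpow', hpow]
            push_cast; ring
          · refine ⟨1 - k, ?_⟩
            have hF : F (i + 1) = 1 - F i := by linarith
            rw [hF, hk, hdiv, hpow', hpow]
            push_cast; ring
        · have hdiv : (i + 1) / 2 = i / 2 + 1 := by
            obtain ⟨a, ha⟩ := ho; omega
          have hpow : (-1 : ℚ) ^ i = -1 := ho.neg_one_pow
          have hpow' : (-1 : ℚ) ^ (i + 1) = 1 := by
            rw [pow_succ, hpow]; ring
          rcases hodd i hi1 hin ho with hc | hc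
          · refine ⟨-k, ?_⟩
            have hF : F (i + 1) = (s : ℚ) / m - F i := by linarith
            rw [hF, hk, hdiv, hpow', hpow]
            push_cast; ring
          · refine ⟨1 - k, ?_⟩
            have hF : F (i + 1) = 1 + (s : ℚ) / m - F i := by linarith
            rw [hF, hk, hdiv, hpow', hpow]
            push_cast; ring
  obtain ⟨k, hk⟩ := key n hn1 le_rfl
  obtain ⟨hr0, hr1⟩ := hrange n hn1 le_rfl
  refine ⟨?_, ?_, ?_⟩
  · -- σ even : F n = s/(2m)
    intro hσe
    have hnodd : Odd n := by
      rcases Nat.even_or_odd n with hne | hno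
      · exfalso
        obtain ⟨a, ha⟩ := hσe
        obtain ⟨b, hb⟩ := hne
        have : 2 ∣ Nat.gcd σ n := Nat.dvd_gcd ⟨a, by omega⟩ ⟨b, by omega⟩
        rw [hcop] at this; omega
      · exact hno
    obtain ⟨q, hq⟩ := hnodd
    obtain ⟨t, ht⟩ := hσe
    have hdiv : n / 2 = q := by omega
    have hpow : (-1 : ℚ) ^ n = -1 := by
      apply Odd.neg_one_pow; exact ⟨q, hq⟩
    have hnat : n * s = 2 * t * m := by
      rw [← hs', ← hm', ht]; ring
    have hqQ : (n : ℚ) * s = 2 * t * m := by exact_mod_cast hnat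
    have hnQ : (n : ℚ) = 2 * q + 1 := by exact_mod_cast hq
    have hdiff : F n - (s : ℚ) / (2 * m) = ((k - t : ℤ) : ℚ) := by
      rw [hk, hdiv, hpow]
      push_cast
      field_simp
      linear_combination (-1:ℚ) * hqQ + (s:ℚ) * hnQ
    have hT0 : (0 : ℚ) ≤ (s : ℚ) / (2 * m) := by positivity
    have hT1 : (s : ℚ) / (2 * m) < 1 := by
      rw [div_lt_one (by positivity)]
      have : (s : ℚ) < m := by exact_mod_cast hsm
      linarith
    have hFn := eq_of_int_diff (F n) ((s : ℚ) / (2 * m)) (k - t) hdiff hr0 hr1 hT0 hT1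
    rw [hFn]; field_simp
  · -- n even : F n = 1/2
    intro hne
    have hσodd : Odd σ := by
      rcases Nat.even_or_odd σ with hσe | hσo
      · exfalso
        obtain ⟨a, ha⟩ := hσe
        obtain ⟨b, hb⟩ := hne
        have : 2 ∣ Nat.gcd σ n := Nat.dvd_gcd ⟨a, by omega⟩ ⟨b, by omega⟩
        rw [hcop] at this; omega
      · exact hσo
    obtain ⟨q, hq⟩ := hne
    obtain ⟨u, hu⟩ := hσodd
    have hdiv : n / 2 = q := by omega
    have hpow : (-1 : ℚ) ^ n = 1 := by
      apply Even.neg_one_pow; exact ⟨q, hq⟩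
    have hnat : n * s = σ * m := by
      rw [← hs', ← hm']; ring
    have hqQ : (n : ℚ) * s = σ * m := by exact_mod_cast hnat
    have hnQ : (n : ℚ) = 2 * q := by exact_mod_cast (by omega : n = 2 * q)
    have hσQ : (σ : ℚ) = 2 * u + 1 := by exact_mod_cast hu
    have hdiff : F n - (1 : ℚ) / 2 = ((k + u : ℤ) : ℚ) := by
      rw [hk, hdiv, hpow]
      push_cast
      field_simp
      linear_combination hqQ - (s:ℚ) * hnQ + (m:ℚ) * hσQ
    have hFn := eq_of_int_diff (F n) ((1 : ℚ) / 2) (k + u) hdiff hr0 hr1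
      (by norm_num) (by norm_num)
    rw [hFn]; ring
  · -- both odd : F n = (s+m)/(2m)
    intro hσo hno
    obtain ⟨q, hq⟩ := hno
    obtain ⟨u, hu⟩ := hσo
    have hdiv : n / 2 = q := by omega
    have hpow : (-1 : ℚ) ^ n = -1 := by
      apply Odd.neg_one_pow; exact ⟨q, hq⟩
    have hnat : n * s + m = 2 * (u + 1) * m := by
      rw [← hs', ← hm', hu]; ring
    have hqQ : (n : ℚ) * s + m = 2 * (u + 1) * m := by exact_mod_cast hnat
    have hnQ : (n : ℚ) = 2 * q + 1 := by exact_mod_cast hq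
    have hdiff : F n - ((s : ℚ) + m) / (2 * m) = ((k - (u + 1) : ℤ) : ℚ) := by
      rw [hk, hdiv, hpow]
      push_cast
      field_simp
      linear_combination (-1:ℚ) * hqQ + (s:ℚ) * hnQ
    have hsmQ : (s : ℚ) < m := by exact_mod_cast hsm
    have hT0 : (0 : ℚ) ≤ ((s : ℚ) + m) / (2 * m) := by positivity
    have hT1 : ((s : ℚ) + m) / (2 * m) < 1 := by
      rw [div_lt_one (by positivity)]
      linarith
    have hFn := eq_of_int_diff (F n) (((s : ℚ) + m) / (2 * m)) (k - (u + 1))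
      hdiff hr0 hr1 hT0 hT1
    rw [hFn]; field_simp
end

section
/- Let 0 < s/m < 1 be a fraction with d = gcd(s, m), let a/b be the last-but-one convergent to s/m with am − bs = d, and let F be the (s/m)-billiard sequence. Then 2m·F(b) = s + d if a is even, 2m·F(b) = m − d if b is even, and 2m·F(b) ≡ s + m + d (mod 2m) if a and b are both odd. -/
theorem stmt_9 (s m : ℕ) (hs : 0 < s) (hsm : s < m)
    (d : ℕ) (hd : d = Nat.gcd s m)
    (a b : ℕ) (ha : 0 < a) (hb : 0 < b) (hbm : b ≤ m / d)
    (hconv : (a : ℤ) * m - (b : ℤ) * s = d)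
    (F : ℕ → ℚ)
    (hF1 : F 1 = 0)
    (hrange : ∀ j, 1 ≤ j → j ≤ m / d → 0 ≤ F j ∧ F j < 1)
    (hodd : ∀ j, 1 ≤ j → j < m / d → Odd j →
      F j + F (j + 1) = (s : ℚ) / m ∨ F j + F (j + 1) = 1 + (s : ℚ) / m)
    (heven : ∀ j, 1 ≤ j → j < m / d → Even j →
      F j + F (j + 1) = 0 ∨ F j + F (j + 1) = 1) :
    (Even a → 2 * (m : ℚ) * F b = s + d) ∧
    (Even b → 2 * (m : ℚ) * F b = m - d) ∧
    (Odd a → Odd b → ∃ t : ℤ, 2 * (m : ℚ) * F b = s + m + d + 2 * m * t) := by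
  have hm0 : (0:ℚ) < m := by exact_mod_cast (by omega : 0 < m)
  have hmne : (m:ℚ) ≠ 0 := ne_of_gt hm0
  have hd0 : 0 < d := by
    subst hd; exact Nat.gcd_pos_of_pos_left _ hs
  have hds : d ∣ s := hd ▸ Nat.gcd_dvd_left _ _
  have hdm : d ∣ m := hd ▸ Nat.gcd_dvd_right _ _
  have hdsle : d ≤ s := Nat.le_of_dvd hs hds
  have hsQ : (0:ℚ) < s := by exact_mod_cast hs
  have hdQ : (0:ℚ) < d := by exact_mod_cast hd0
  have hsmQ : (s:ℚ) < m := by exact_mod_cast hsm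
  have hdsQ : (d:ℚ) ≤ s := by exact_mod_cast hdsle
  have hconvQ : (a:ℚ) * m - (b:ℚ) * s = d := by exact_mod_cast hconv
  -- a and b are not both even
  have hnotboth : ¬ (Even a ∧ Even b) := by
    rintro ⟨⟨u, hu⟩, ⟨v, hv⟩⟩
    obtain ⟨m1, hm1⟩ := hdm
    obtain ⟨s1, hs1⟩ := hds
    subst hu hv hm1 hs1
    have h2 : ((2 * (u * m1 - v * s1) : ℤ)) * d = 1 * d := by
      push_cast at hconv ⊢; ring_nf at hconv ⊢; linarith
    have := mul_right_cancel₀ (by exact_mod_cast hd0.ne' : (d:ℤ) ≠ 0) h2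
    omega
  -- explicit formula for F
  have key : ∀ j, 1 ≤ j → j ≤ m / d →
      F j = Int.fract ((-1)^j * ((j/2 : ℕ) : ℚ) * s / m) := by
    intro j hj
    induction j, hj using Nat.le_induction with
    | base => intro _; rw [hF1]; norm_num
    | succ j hj ih =>
      intro hle
      have hjlt : j < m / d := by omega
      have hFj := ih (by omega)
      obtain ⟨hr0, hr1⟩ := hrange (j+1) (by omega) hle
      set xj : ℚ := (-1)^j * ((j/2 : ℕ) : ℚ) * s / m with hxj
      rcases Nat.even_or_odd j with hjE | hjO
      · -- even j : F j + F (j+1) = 0 or 1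
        have hj2 : j % 2 = 0 := Nat.even_iff.mp hjE
        have hhalf : ((j+1)/2 : ℕ) = j/2 := by omega
        have hpow : ((-1:ℚ))^(j+1) = -1 := by
          rw [pow_succ, hjE.neg_one_pow]; ring
        have hgoal : (-1:ℚ)^(j+1) * (((j+1)/2 : ℕ) : ℚ) * s / m = -xj := by
          rw [hpow, hhalf, hxj, hjE.neg_one_pow]; ring
        rw [hgoal]
        rcases heven j (by omega) hjlt hjE with h | h
        · symm
          rw [Int.fract_eq_iff]
          refine ⟨hr0, hr1, ⟨-⌊xj⌋, ?_⟩⟩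
          have hfr : F j = xj - ⌊xj⌋ := by rw [hFj]; rfl
          rw [hfr] at h; push_cast; linarith
        · symm
          rw [Int.fract_eq_iff]
          refine ⟨hr0, hr1, ⟨-⌊xj⌋ - 1, ?_⟩⟩
          have hfr : F j = xj - ⌊xj⌋ := by rw [hFj]; rfl
          rw [hfr] at h; push_cast; linarith
      · -- odd j : F j + F (j+1) = s/m or 1 + s/m
        have hj2 : j % 2 = 1 := Nat.odd_iff.mp hjO
        have hhalf : ((j+1)/2 : ℕ) = j/2 + 1 := by omega
        have hpow : ((-1:ℚ))^(j+1) = 1 := by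
          rw [pow_succ, hjO.neg_one_pow]; ring
        have hgoal : (-1:ℚ)^(j+1) * (((j+1)/2 : ℕ) : ℚ) * s / m = (s:ℚ)/m - xj := by
          rw [hpow, hhalf, hxj, hjO.neg_one_pow]; push_cast; ring
        rw [hgoal]
        rcases hodd j (by omega) hjlt hjO with h | h
        · symm
          rw [Int.fract_eq_iff]
          refine ⟨hr0, hr1, ⟨-⌊xj⌋, ?_⟩⟩
          have hfr : F j = xj - ⌊xj⌋ := by rw [hFj]; rfl
          rw [hfr] at h; push_cast; linarith
        · symm
          rw [Int.fract_eq_iff]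
          refine ⟨hr0, hr1, ⟨-⌊xj⌋ - 1, ?_⟩⟩
          have hfr : F j = xj - ⌊xj⌋ := by rw [hFj]; rfl
          rw [hfr] at h; push_cast; linarith
  have hFb := key b hb hbm
  rcases Nat.even_or_odd b with hbE | hbO
  · -- b even
    have haO : Odd a := by
      rcases Nat.even_or_odd a with h | h
      · exact absurd ⟨h, hbE⟩ hnotboth
      · exact h
    obtain ⟨k, hk⟩ := hbE
    obtain ⟨t, ht⟩ := haO
    have hk1 : 1 ≤ k := by omega
    have hbk : (b:ℚ) = 2*k := by rw [hk]; push_cast; ring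
    have hat : (a:ℚ) = 2*t+1 := by rw [ht]; push_cast; ring
    rw [hbk, hat] at hconvQ
    have hx : F b = Int.fract ((k:ℚ) * s / m) := by
      rw [hFb, Even.neg_one_pow (⟨k, hk⟩ : Even b)]
      have hh : b / 2 = k := by omega
      rw [hh]; ring_nf
    have hval : Int.fract ((k:ℚ) * s / m) = ((m:ℚ) - d) / (2*m) := by
      rw [Int.fract_eq_iff]
      refine ⟨div_nonneg (by linarith) (by linarith), ?_, ⟨t, ?_⟩⟩
      · rw [div_lt_one (by linarith)]; linarith
      · field_simp
        linear_combination (-1:ℚ) * hconvQ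
    refine ⟨?_, ?_, ?_⟩
    · intro haE; exact absurd ⟨haE, ⟨k, hk⟩⟩ hnotboth
    · intro _; rw [hx, hval]; field_simp
    · intro _ hbO'; exact absurd ⟨k, hk⟩ (Nat.not_even_iff_odd.mpr hbO')
  · -- b odd
    obtain ⟨k, hk⟩ := hbO
    have hx : F b = Int.fract (-((k:ℚ) * s) / m) := by
      rw [hFb, Odd.neg_one_pow (⟨k, hk⟩ : Odd b)]
      have hh : b / 2 = k := by omega
      rw [hh]; ring_nf
    have hbk : (b:ℚ) = 2*k+1 := by rw [hk]; push_cast; ring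
    rw [hbk] at hconvQ
    rcases Nat.even_or_odd a with haE | haO
    · -- a even
      obtain ⟨u, hu⟩ := haE
      have hu1 : 1 ≤ u := by omega
      have hau : (a:ℚ) = 2*u := by rw [hu]; push_cast; ring
      rw [hau] at hconvQ
      have hval : Int.fract (-((k:ℚ) * s) / m) = ((s:ℚ) + d) / (2*m) := by
        rw [Int.fract_eq_iff]
        refine ⟨by positivity, ?_, ⟨-u, ?_⟩⟩
        · rw [div_lt_one (by linarith)]; linarith
        · push_cast
          field_simp
          linear_combination hconvQ
      refine ⟨?_, ?_, ?_⟩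
      · intro _; rw [hx, hval]; field_simp
      · intro hbE'; exact absurd hbE' (Nat.not_even_iff_odd.mpr ⟨k, hk⟩)
      · intro haO' _; exact absurd ⟨u, hu⟩ (Nat.not_even_iff_odd.mpr haO')
    · -- a odd, b odd
      obtain ⟨t, ht⟩ := haO
      have hat : (a:ℚ) = 2*t+1 := by rw [ht]; push_cast; ring
      rw [hat] at hconvQ
      refine ⟨?_, ?_, ?_⟩
      · intro haE'; exact absurd haE' (Nat.not_even_iff_odd.mpr ⟨t, ht⟩)
      · intro hbE'; exact absurd hbE' (Nat.not_even_iff_odd.mpr ⟨k, hk⟩)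
      · intro _ _
        refine ⟨-(t+1 : ℤ) - ⌊-((k:ℚ) * s) / m⌋, ?_⟩
        have hfr : F b = -((k:ℚ) * s) / m - ⌊-((k:ℚ) * s) / m⌋ := by rw [hx]; rfl
        rw [hfr]
        push_cast
        field_simp
        linear_combination hconvQ
end

section
/- Let a₁/b₁ < s/m < a₂/b₂ be three successive terms of the Farey sequence of order m, with s/m in lowest terms. Then b₁ + b₂ = m and exactly one of a₁/b₁, a₂/b₂ is the last-but-one convergent of the continued fraction expansion of s/m; specifically, a₁/b₁ is the penultimate convergent if and only if the length n of the continued fraction s/m = [0; a₁, …, a_n] is odd. -/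
/-- Value of the continued fraction [0; a₁, …, a_n] given by the list [a₁, …, a_n]. -/
def cfVal : List ℕ → ℚ
  | [] => 0
  | a :: t => 1 / (a + cfVal t)

/-- Continuants: (cfCont L).1 = K(L), (cfCont L).2 = K(L.tail). -/
def cfCont : List ℕ → ℕ × ℕ
  | [] => (1, 0)
  | a :: t => (a * (cfCont t).1 + (cfCont t).2, (cfCont t).1)

lemma cfCont_fst_pos : ∀ L : List ℕ, (∀ x ∈ L, 0 < x) → 0 < (cfCont L).1
  | [], _ => by simp [cfCont]
  | a :: t, h => by
    have ha : 0 < a := h a List.mem_cons_self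
    have ht := cfCont_fst_pos t (fun x hx => h x (List.mem_cons_of_mem _ hx))
    simp only [cfCont]
    exact Nat.add_pos_left (Nat.mul_pos ha ht) _

lemma cfCont_snd_le : ∀ L : List ℕ, (∀ x ∈ L, 0 < x) → (cfCont L).2 ≤ (cfCont L).1
  | [], _ => by simp [cfCont]
  | a :: t, h => by
    have ha : 0 < a := h a List.mem_cons_self
    simp only [cfCont]
    calc (cfCont t).1 ≤ a * (cfCont t).1 := Nat.le_mul_of_pos_left _ ha
      _ ≤ a * (cfCont t).1 + (cfCont t).2 := Nat.le_add_right _ _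

lemma cfCont_coprime : ∀ L : List ℕ, Nat.Coprime (cfCont L).2 (cfCont L).1
  | [] => by simp [cfCont]
  | a :: t => by
    have ih := cfCont_coprime t
    simp only [cfCont]
    have : a * (cfCont t).1 + (cfCont t).2 = (cfCont t).2 + (cfCont t).1 * a := by ring
    rw [this]
    exact (Nat.coprime_add_mul_left_right _ _ a).mpr ih.symm

lemma cfVal_cfCont : ∀ L : List ℕ, (∀ x ∈ L, 0 < x) →
    cfVal L = ((cfCont L).2 : ℚ) / ((cfCont L).1 : ℚ)
  | [], _ => by simp [cfVal, cfCont]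
  | a :: t, h => by
    have ha : 0 < a := h a List.mem_cons_self
    have ht := cfCont_fst_pos t (fun x hx => h x (List.mem_cons_of_mem _ hx))
    have ih := cfVal_cfCont t (fun x hx => h x (List.mem_cons_of_mem _ hx))
    have ht' : ((cfCont t).1 : ℚ) ≠ 0 := by positivity
    have ha' : (0:ℚ) < a := by exact_mod_cast ha
    have hden : (0:ℚ) < a * (cfCont t).1 + (cfCont t).2 := by positivity
    simp only [cfVal, cfCont, ih]
    push_cast
    rw [div_eq_div_iff (by positivity) (by positivity)]
    field_simp

lemma cfCont_det : ∀ L : List ℕ, L ≠ [] →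
    ((cfCont L).1 : ℤ) * ((cfCont L.dropLast).2 : ℤ) -
      ((cfCont L).2 : ℤ) * ((cfCont L.dropLast).1 : ℤ) = (-1) ^ L.length
  | [], h => absurd rfl h
  | [a], _ => by simp [cfCont]
  | a :: b :: t, _ => by
    have ih := cfCont_det (b :: t) (by simp)
    simp only [List.dropLast_cons₂, cfCont, List.length_cons] at *
    push_cast at *
    ring_nf at *
    linarith [ih]

lemma cfCont_dropLast_lt : ∀ (L : List ℕ) (x : ℕ), L.getLast? = some x → 2 ≤ x →
    (∀ y ∈ L, 0 < y) →
    (cfCont L.dropLast).1 < (cfCont L).1 ∧ (cfCont L.dropLast).2 < (cfCont L).2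
  | [], x, hx, _, _ => by simp at hx
  | [a], x, hx, h2, _ => by
    simp [List.getLast?] at hx
    subst hx
    simp [cfCont]
    omega
  | a :: b :: t, x, hx, h2, hpos => by
    have ih := cfCont_dropLast_lt (b :: t) x (by simpa using hx) h2
      (fun y hy => hpos y (List.mem_cons_of_mem _ hy))
    have ha : 0 < a := hpos a List.mem_cons_self
    rw [List.dropLast_cons₂]
    show a * (cfCont ((b :: t).dropLast)).1 + (cfCont ((b :: t).dropLast)).2 <
        a * (cfCont (b :: t)).1 + (cfCont (b :: t)).2 ∧
      (cfCont ((b :: t).dropLast)).1 < (cfCont (b :: t)).1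
    refine ⟨?_, ih.1⟩
    have h1 : a * (cfCont ((b :: t).dropLast)).1 < a * (cfCont (b :: t)).1 :=
      (Nat.mul_lt_mul_left ha).mpr ih.1
    omega

set_option maxHeartbeats 1000000 in
theorem stmt_10 (m s a₁ b₁ a₂ b₂ : ℕ) (L : List ℕ)
    (hm : 1 < m) (hs : 0 < s) (hsm : s < m) (hcop : Nat.gcd s m = 1)
    -- L is the canonical continued fraction expansion of s/m:
    (hL : L ≠ []) (hLpos : ∀ x ∈ L, 0 < x)
    (hLlast : ∀ x, L.getLast? = some x → 2 ≤ x)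
    (hLval : cfVal L = (s : ℚ) / m)
    -- a₁/b₁, s/m, a₂/b₂ are three successive terms of the Farey sequence of order m:
    (hb₁ : 0 < b₁) (hb₂ : 0 < b₂) (hb₁m : b₁ ≤ m) (hb₂m : b₂ ≤ m)
    (ha₁ : a₁ ≤ b₁) (ha₂ : a₂ ≤ b₂)
    (hcop₁ : Nat.gcd a₁ b₁ = 1) (hcop₂ : Nat.gcd a₂ b₂ = 1)
    (hlt₁ : (a₁ : ℚ) / b₁ < (s : ℚ) / m) (hlt₂ : (s : ℚ) / m < (a₂ : ℚ) / b₂)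
    (hadj₁ : ¬ ∃ a b : ℕ, 0 < b ∧ b ≤ m ∧ a ≤ b ∧ Nat.gcd a b = 1 ∧
      (a₁ : ℚ) / b₁ < (a : ℚ) / b ∧ (a : ℚ) / b < (s : ℚ) / m)
    (hadj₂ : ¬ ∃ a b : ℕ, 0 < b ∧ b ≤ m ∧ a ≤ b ∧ Nat.gcd a b = 1 ∧
      (s : ℚ) / m < (a : ℚ) / b ∧ (a : ℚ) / b < (a₂ : ℚ) / b₂) :
    b₁ + b₂ = m ∧
    ((a₁ : ℚ) / b₁ = cfVal L.dropLast ↔ Odd L.length) ∧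
    ((a₂ : ℚ) / b₂ = cfVal L.dropLast ↔ ¬ Odd L.length) := by
  have hmQ : (0:ℚ) < m := by exact_mod_cast (by omega : 0 < m)
  have hb₁Q : (0:ℚ) < b₁ := by exact_mod_cast hb₁
  have hb₂Q : (0:ℚ) < b₂ := by exact_mod_cast hb₂
  -- s*b₁ - m*a₁ ≥ 1 and m*a₂ - s*b₂ ≥ 1
  have h2L : 1 ≤ (s:ℤ) * b₁ - m * a₁ := by
    rw [div_lt_div_iff₀ hb₁Q hmQ] at hlt₁
    have : (a₁:ℤ) * m < s * b₁ := by exact_mod_cast hlt₁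
    linarith
  have h2R : 1 ≤ (m:ℤ) * a₂ - s * b₂ := by
    rw [div_lt_div_iff₀ hmQ hb₂Q] at hlt₂
    have : (s:ℤ) * b₂ < a₂ * m := by exact_mod_cast hlt₂
    linarith
  -- uniqueness of the left neighbour
  have key₁ : ∀ p q : ℕ, 0 < q → q ≤ m → Nat.gcd p q = 1 →
      (s:ℤ) * q - (m:ℤ) * p = 1 → p = a₁ ∧ q = b₁ := by
    intro p q hq0 hqm hgcd hdet
    have hqQ : (0:ℚ) < q := by exact_mod_cast hq0
    have hpq : p < q := by
      have h1 : (m:ℤ) * p < m * q := by nlinarith [hdet]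
      have : (p:ℤ) < q := lt_of_mul_lt_mul_left h1 (by positivity)
      exact_mod_cast this
    have hps : (p:ℚ) / q < (s:ℚ) / m := by
      rw [div_lt_div_iff₀ hqQ hmQ]
      have : (p:ℤ) * m < s * q := by linarith [hdet]
      exact_mod_cast this
    rcases lt_trichotomy ((p:ℚ) / q) ((a₁:ℚ) / b₁) with h | h | h
    · exfalso
      have h3 : 1 ≤ (a₁:ℤ) * q - p * b₁ := by
        rw [div_lt_div_iff₀ hqQ hb₁Q] at h
        have : (p:ℤ) * b₁ < a₁ * q := by exact_mod_cast h
        linarith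
      have hid : (b₁:ℤ) = q * ((s:ℤ) * b₁ - m * a₁) + m * ((a₁:ℤ) * q - p * b₁) := by
        linear_combination -(b₁:ℤ) * hdet
      have hA : (q:ℤ) ≤ q * ((s:ℤ) * b₁ - m * a₁) :=
        le_mul_of_one_le_right (by positivity) h2L
      have hB : (m:ℤ) ≤ m * ((a₁:ℤ) * q - p * b₁) :=
        le_mul_of_one_le_right (by positivity) h3
      have hmb : (m:ℤ) < b₁ := by
        have hq1 : (1:ℤ) ≤ q := by exact_mod_cast hq0
        linarith
      have : m < b₁ := by exact_mod_cast hmb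
      omega
    · rw [div_eq_div_iff hqQ.ne' hb₁Q.ne'] at h
      have hcross : p * b₁ = a₁ * q := by exact_mod_cast h
      have hq_dvd : q ∣ b₁ := by
        have : q ∣ p * b₁ := hcross ▸ Dvd.intro_left a₁ rfl
        exact Nat.Coprime.dvd_of_dvd_mul_left (Nat.coprime_comm.mp hgcd) this
      have hb_dvd : b₁ ∣ q := by
        have : b₁ ∣ a₁ * q := hcross ▸ Dvd.intro_left p rfl
        exact Nat.Coprime.dvd_of_dvd_mul_left (Nat.coprime_comm.mp hcop₁) this
      have hqb : q = b₁ := Nat.dvd_antisymm hq_dvd hb_dvd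
      subst hqb
      exact ⟨Nat.eq_of_mul_eq_mul_right hb₁ hcross, rfl⟩
    · exact absurd ⟨p, q, hq0, hqm, hpq.le, hgcd, h, hps⟩ hadj₁
  -- uniqueness of the right neighbour
  have key₂ : ∀ p q : ℕ, 0 < q → q ≤ m → Nat.gcd p q = 1 →
      (m:ℤ) * p - (s:ℤ) * q = 1 → p = a₂ ∧ q = b₂ := by
    intro p q hq0 hqm hgcd hdet
    have hqQ : (0:ℚ) < q := by exact_mod_cast hq0
    have hq1 : (1:ℤ) ≤ q := by exact_mod_cast hq0
    have hpq : p ≤ q := by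
      have h1 : (m:ℤ) * p ≤ m * q := by nlinarith [hdet]
      have : (p:ℤ) ≤ q := le_of_mul_le_mul_left h1 (by positivity)
      exact_mod_cast this
    have hps : (s:ℚ) / m < (p:ℚ) / q := by
      rw [div_lt_div_iff₀ hmQ hqQ]
      have : (s:ℤ) * q < p * m := by linarith [hdet]
      exact_mod_cast this
    rcases lt_trichotomy ((p:ℚ) / q) ((a₂:ℚ) / b₂) with h | h | h
    · exact absurd ⟨p, q, hq0, hqm, hpq, hgcd, hps, h⟩ hadj₂
    · rw [div_eq_div_iff hqQ.ne' hb₂Q.ne'] at h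
      have hcross : p * b₂ = a₂ * q := by exact_mod_cast h
      have hq_dvd : q ∣ b₂ := by
        have : q ∣ p * b₂ := hcross ▸ Dvd.intro_left a₂ rfl
        exact Nat.Coprime.dvd_of_dvd_mul_left (Nat.coprime_comm.mp hgcd) this
      have hb_dvd : b₂ ∣ q := by
        have : b₂ ∣ a₂ * q := hcross ▸ Dvd.intro_left p rfl
        exact Nat.Coprime.dvd_of_dvd_mul_left (Nat.coprime_comm.mp hcop₂) this
      have hqb : q = b₂ := Nat.dvd_antisymm hq_dvd hb_dvd
      subst hqb
      exact ⟨Nat.eq_of_mul_eq_mul_right hb₂ hcross, rfl⟩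
    · exfalso
      have h3 : 1 ≤ (p:ℤ) * b₂ - a₂ * q := by
        rw [div_lt_div_iff₀ hb₂Q hqQ] at h
        have : (a₂:ℤ) * q < p * b₂ := by exact_mod_cast h
        linarith
      have hid : (b₂:ℤ) = q * ((m:ℤ) * a₂ - s * b₂) + m * ((p:ℤ) * b₂ - a₂ * q) := by
        linear_combination -(b₂:ℤ) * hdet
      have hA : (q:ℤ) ≤ q * ((m:ℤ) * a₂ - s * b₂) :=
        le_mul_of_one_le_right (by positivity) h2R
      have hB : (m:ℤ) ≤ m * ((p:ℤ) * b₂ - a₂ * q) :=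
        le_mul_of_one_le_right (by positivity) h3
      have hmb : (m:ℤ) < b₂ := by linarith
      have : m < b₂ := by exact_mod_cast hmb
      omega
  -- existence: construct the actual Farey neighbours of s/m
  obtain ⟨q₁, hq₁lt, p₁, heq1⟩ : ∃ q₁, q₁ < m ∧ ∃ p₁, s * q₁ = m * p₁ + 1 := by
    haveI : NeZero m := ⟨by omega⟩
    set q := ((s : ZMod m)⁻¹).val with hqdef
    have hmul : ((s * q : ℕ) : ZMod m) = ((1:ℕ) : ZMod m) := by
      push_cast
      rw [hqdef, ZMod.natCast_val, ZMod.cast_id, ZMod.mul_inv_eq_gcd, ZMod.val_natCast,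
        ← Nat.gcd_rec, Nat.gcd_comm, hcop]
      norm_num
    have hmod : s * q ≡ 1 [MOD m] := (ZMod.natCast_eq_natCast_iff _ _ _).mp hmul
    have h1m : 1 % m = 1 := Nat.mod_eq_of_lt hm
    have hmodeq : (s * q) % m = 1 := by rwa [Nat.ModEq, h1m] at hmod
    exact ⟨q, ZMod.val_lt _, (s * q) / m, by rw [← hmodeq]; exact (Nat.div_add_mod _ _).symm⟩
  have hq₁0 : 0 < q₁ := by
    rcases Nat.eq_zero_or_pos q₁ with h | h
    · rw [h] at heq1; simp at heq1
    · exact h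
  have hdet₁ : (s:ℤ) * q₁ - (m:ℤ) * p₁ = 1 := by
    have := heq1
    zify at this
    linarith
  have hp₁s : p₁ < s := by
    have hq₁le : (q₁:ℤ) ≤ (m:ℤ) - 1 := by
      have : (q₁:ℤ) < m := by exact_mod_cast hq₁lt
      omega
    have h2 : (s:ℤ) * q₁ ≤ s * (m:ℤ) - s := by
      calc (s:ℤ) * q₁ ≤ s * ((m:ℤ) - 1) := mul_le_mul_of_nonneg_left hq₁le (by positivity)
        _ = s * (m:ℤ) - s := by ring
    have h1 : (m:ℤ) * p₁ < m * s := by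
      have hs1 : (1:ℤ) ≤ s := by exact_mod_cast hs
      linarith [hdet₁, h2]
    have : (p₁:ℤ) < s := lt_of_mul_lt_mul_left h1 (by positivity)
    exact_mod_cast this
  have hgcd₁ : Nat.gcd p₁ q₁ = 1 := by
    have hd1 : Nat.gcd p₁ q₁ ∣ m * p₁ := Dvd.dvd.mul_left (Nat.gcd_dvd_left _ _) m
    have hd2 : Nat.gcd p₁ q₁ ∣ s * q₁ := Dvd.dvd.mul_left (Nat.gcd_dvd_right _ _) s
    have : Nat.gcd p₁ q₁ ∣ 1 := by
      rw [heq1] at hd2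
      exact (Nat.dvd_add_right hd1).mp hd2
    exact Nat.eq_one_of_dvd_one this
  obtain ⟨hpa₁, hqb₁⟩ := key₁ p₁ q₁ hq₁0 hq₁lt.le hgcd₁ hdet₁
  -- right neighbour
  set q₂ := m - q₁ with hq₂def
  set p₂ := s - p₁ with hp₂def
  have hq₂0 : 0 < q₂ := by omega
  have hq₂m : q₂ ≤ m := by omega
  have hdet₂ : (m:ℤ) * p₂ - (s:ℤ) * q₂ = 1 := by
    have h1 : (p₂:ℤ) = s - p₁ := by
      rw [hp₂def]; push_cast [Nat.cast_sub hp₁s.le]; ring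
    have h2 : (q₂:ℤ) = m - q₁ := by
      rw [hq₂def]; push_cast [Nat.cast_sub hq₁lt.le]; ring
    rw [h1, h2]; linarith [hdet₁]
  have hgcd₂ : Nat.gcd p₂ q₂ = 1 := by
    have heq2 : m * p₂ = s * q₂ + 1 := by
      have : (m:ℤ) * p₂ = s * q₂ + 1 := by linarith [hdet₂]
      exact_mod_cast this
    have hd1 : Nat.gcd p₂ q₂ ∣ s * q₂ := Dvd.dvd.mul_left (Nat.gcd_dvd_right _ _) s
    have hd2 : Nat.gcd p₂ q₂ ∣ m * p₂ := Dvd.dvd.mul_left (Nat.gcd_dvd_left _ _) m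
    have : Nat.gcd p₂ q₂ ∣ 1 := by
      rw [heq2] at hd2
      exact (Nat.dvd_add_right hd1).mp hd2
    exact Nat.eq_one_of_dvd_one this
  obtain ⟨hpa₂, hqb₂⟩ := key₂ p₂ q₂ hq₂0 hq₂m hgcd₂ hdet₂
  have hsum : b₁ + b₂ = m := by omega
  -- part 2: the penultimate convergent
  have hLpos' : ∀ x ∈ L.dropLast, 0 < x := fun x hx =>
    hLpos x ((List.dropLast_sublist L).subset hx)
  obtain ⟨x, hx⟩ : ∃ x, L.getLast? = some x := by
    cases L with
    | nil => exact absurd rfl hL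
    | cons a t => exact ⟨_, List.getLast?_eq_getLast (by simp)⟩
  have hx2 := hLlast x hx
  have hstrict := cfCont_dropLast_lt L x hx hx2 hLpos
  have hMpos := cfCont_fst_pos L hLpos
  have hvq := cfVal_cfCont L hLpos
  rw [hvq] at hLval
  have hMQ : ((cfCont L).1 : ℚ) ≠ 0 := by exact_mod_cast hMpos.ne'
  rw [div_eq_div_iff hMQ hmQ.ne'] at hLval
  have hcross : (cfCont L).2 * m = s * (cfCont L).1 := by exact_mod_cast hLval
  have hMm : (cfCont L).1 = m := by
    have h1 : (cfCont L).1 ∣ m := by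
      have hdvd : (cfCont L).1 ∣ (cfCont L).2 * m := ⟨s, by rw [hcross]; ring⟩
      exact Nat.Coprime.dvd_of_dvd_mul_left (cfCont_coprime L).symm hdvd
    have h2 : m ∣ (cfCont L).1 := by
      have hdvd : m ∣ s * (cfCont L).1 := ⟨(cfCont L).2, by rw [← hcross]; ring⟩
      exact Nat.Coprime.dvd_of_dvd_mul_left (Nat.coprime_comm.mp hcop) hdvd
    exact Nat.dvd_antisymm h1 h2
  have hSs : (cfCont L).2 = s := by
    have h3 : (cfCont L).2 * m = s * m := by rw [hcross, hMm]
    exact Nat.eq_of_mul_eq_mul_right (by omega) h3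
  have hdetL := cfCont_det L hL
  rw [hMm, hSs] at hdetL
  set p' := (cfCont L.dropLast).2 with hp'
  set q' := (cfCont L.dropLast).1 with hq'
  have hq'pos : 0 < q' := cfCont_fst_pos L.dropLast hLpos'
  have hq'm : q' < m := by rw [← hMm]; exact hstrict.1
  have hgcd' : Nat.gcd p' q' = 1 := cfCont_coprime L.dropLast
  have hvdl : cfVal L.dropLast = (p' : ℚ) / q' := cfVal_cfCont L.dropLast hLpos'
  have hne : (a₁ : ℚ) / b₁ ≠ (a₂ : ℚ) / b₂ := ne_of_lt (hlt₁.trans hlt₂)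
  by_cases hodd : Odd L.length
  · have hdet1 : (s:ℤ) * q' - (m:ℤ) * p' = 1 := by
      rw [hodd.neg_one_pow] at hdetL; linarith
    obtain ⟨hp1, hq1⟩ := key₁ p' q' hq'pos hq'm.le hgcd' hdet1
    have heq : (a₁ : ℚ) / b₁ = cfVal L.dropLast := by rw [hvdl, hp1, hq1]
    exact ⟨hsum, ⟨fun _ => hodd, fun _ => heq⟩,
      ⟨fun h => absurd (heq.trans h.symm) hne, fun hn => (hn hodd).elim⟩⟩
  · have heven : Even L.length := Nat.not_odd_iff_even.mp hodd
    have hdet2 : (m:ℤ) * p' - (s:ℤ) * q' = 1 := by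
      rw [heven.neg_one_pow] at hdetL; linarith
    obtain ⟨hp2, hq2⟩ := key₂ p' q' hq'pos hq'm.le hgcd' hdet2
    have heq : (a₂ : ℚ) / b₂ = cfVal L.dropLast := by rw [hvdl, hp2, hq2]
    exact ⟨hsum, ⟨fun h => (hne (h.trans heq.symm)).elim, fun ho => (hodd ho).elim⟩,
      ⟨fun _ => hodd, fun _ => heq⟩⟩
end
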